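/- arXiv:1001.1842 — 8 statements merged into one kernel-verified Lean document; each statement's English description precedes it below -/
import Mathlib

section
/- Let u ∈ ℝ³ be future-directed with η(u,u) = −1, let b ∈ ℝ³, and let p ∈ ℝ³ be a point not lying on the line ℓ(t) = t·u + b (i.e. p ≠ ℓ(t) for all t ∈ ℝ). Then there exists exactly one t_r ∈ ℝ such that ℓ(t_r) − p is lightlike and future-directed, i.e. η(ℓ(t_r) − p, ℓ(t_r) − p) = 0 and (ℓ(t_r) − p)⁰ > 0. -/
noncomputable section

/-- The Minkowski bilinear form `η` on `ℝ³`: `η(x,y) = -x⁰y⁰ + x¹y¹ + x²y²`. -/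
def eta (x y : Fin 3 → ℝ) : ℝ := -(x 0 * y 0) + x 1 * y 1 + x 2 * y 2

/-- The Minkowski cross product `x∧y`: the unique vector with `η(x∧y, w) = det(x,y,w)`
for all `w`, where `det(x,y,w)` is the determinant of the matrix with columns `x`, `y`, `w`. -/
def mcross (x y : Fin 3 → ℝ) : Fin 3 → ℝ :=
  ![x 2 * y 1 - x 1 * y 2, x 2 * y 0 - x 0 * y 2, x 0 * y 1 - x 1 * y 0]

/-- A lightlike vector having negative Minkowski product with a future-directed
unit timelike vector is future-directed. -/
lemma key_pos (u0 u1 u2 x0 x1 x2 : ℝ) (hu : u0^2 = 1 + u1^2 + u2^2) (hu0 : 0 < u0)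
    (hx : x0^2 = x1^2 + x2^2) (h : -(u0*x0) + u1*x1 + u2*x2 < 0) : 0 < x0 := by
  by_contra hle
  push_neg at hle
  nlinarith [sq_nonneg (u1*x2 - u2*x1), sq_nonneg (u1*x1 + u2*x2),
    mul_nonneg hu0.le (neg_nonneg.2 hle), sq_nonneg x0, sq_nonneg (u0*x0 - u1*x1 - u2*x2)]

lemma root_pos (u0 u1 u2 x0 x1 x2 s : ℝ) (hu : u0^2 = 1 + u1^2 + u2^2) (hu0 : 0 < u0)
    (hzero : -(x0*x0) + x1*x1 + x2*x2 = 0)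
    (heu : -(u0*x0) + u1*x1 + u2*x2 = -s) (hs : 0 < s) : 0 < x0 := by
  exact key_pos u0 u1 u2 x0 x1 x2 hu hu0 (by nlinarith) (by linarith)

lemma root_neg (u0 u1 u2 x0 x1 x2 s : ℝ) (hu : u0^2 = 1 + u1^2 + u2^2) (hu0 : 0 < u0)
    (hzero : -(x0*x0) + x1*x1 + x2*x2 = 0)
    (heu : -(u0*x0) + u1*x1 + u2*x2 = s) (hs : 0 < s) : x0 < 0 := by
  have := key_pos u0 u1 u2 (-x0) (-x1) (-x2) hu hu0 (by nlinarith) (by linarith)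
  linarith

/-- A vector Minkowski-orthogonal to a unit timelike vector is spacelike. -/
lemma spacelike (u0 u1 u2 w0 w1 w2 : ℝ) (hu : u0^2 = 1 + u1^2 + u2^2)
    (horth : -(u0*w0) + u1*w1 + u2*w2 = 0) : 0 ≤ -w0^2 + w1^2 + w2^2 := by
  have hsq : (u0*w0)^2 = (u1*w1 + u2*w2)^2 := by
    linear_combination (-(u0*w0) - u1*w1 - u2*w2) * horth
  nlinarith [hsq, sq_nonneg (u1*w2 - u2*w1), sq_nonneg w1, sq_nonneg w2]

lemma spacelike_eq (u0 u1 u2 w0 w1 w2 : ℝ) (hu : u0^2 = 1 + u1^2 + u2^2) (hu0 : 0 < u0)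
    (horth : -(u0*w0) + u1*w1 + u2*w2 = 0) (hzero : -w0^2 + w1^2 + w2^2 = 0) :
    w0 = 0 ∧ w1 = 0 ∧ w2 = 0 := by
  have hsq : (u0*w0)^2 = (u1*w1 + u2*w2)^2 := by
    linear_combination (-(u0*w0) - u1*w1 - u2*w2) * horth
  have h12 : w1^2 + w2^2 = 0 := by
    nlinarith [hsq, sq_nonneg (u1*w2 - u2*w1), mul_pos hu0 hu0, sq_nonneg w1, sq_nonneg w2]
  have h1 : w1 = 0 := by nlinarith [sq_nonneg w1, sq_nonneg w2]
  have h2 : w2 = 0 := by nlinarith [sq_nonneg w1, sq_nonneg w2]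
  have h0 : w0 = 0 := by nlinarith
  exact ⟨h0, h1, h2⟩

/-- Every point of a future-directed timelike line is connected to any external
point `p` by exactly one future-directed lightlike segment. -/
theorem unique_future_lightlike_connection
    (u b p : Fin 3 → ℝ) (hu : eta u u = -1) (hu0 : 0 < u 0)
    (hp : ∀ t : ℝ, p ≠ t • u + b) :
    ∃! tr : ℝ, eta (tr • u + b - p) (tr • u + b - p) = 0 ∧ 0 < (tr • u + b - p) 0 := by
  have hu' : -(u 0 * u 0) + u 1 * u 1 + u 2 * u 2 = -1 := hu
  have hu'' : (u 0)^2 = 1 + (u 1)^2 + (u 2)^2 := by nlinarith [hu']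
  have hcoord : ∀ (t : ℝ) (i : Fin 3), (t • u + b - p) i = t * u i + b i - p i := by
    intro t i; simp [smul_eq_mul]
  set B : ℝ := -(u 0 * (b 0 - p 0)) + u 1 * (b 1 - p 1) + u 2 * (b 2 - p 2) with hB
  set C : ℝ := -((b 0 - p 0) * (b 0 - p 0)) + (b 1 - p 1) * (b 1 - p 1)
      + (b 2 - p 2) * (b 2 - p 2) with hC
  set D : ℝ := B^2 + C with hD
  -- value of the quadratic
  have hval : ∀ t : ℝ, eta (t • u + b - p) (t • u + b - p) = -(t - B)^2 + D := by
    intro t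
    simp only [eta, hcoord, hD, hB, hC]
    linear_combination (t^2) * hu'
  -- the Minkowski product of u with the connecting segment
  have heu : ∀ t : ℝ, -(u 0 * (t • u + b - p) 0) + u 1 * (t • u + b - p) 1
      + u 2 * (t • u + b - p) 2 = B - t := by
    intro t
    simp only [hcoord, hB]
    linear_combination t * hu'
  -- D > 0 since p is off the line
  have hDpos : 0 < D := by
    have horth : -(u 0 * ((b 0 - p 0) + B * u 0)) + u 1 * ((b 1 - p 1) + B * u 1)
        + u 2 * ((b 2 - p 2) + B * u 2) = 0 := by
      simp only [hB]; linear_combination B * hu'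
    have hDeq : D = -((b 0 - p 0) + B * u 0)^2 + ((b 1 - p 1) + B * u 1)^2
        + ((b 2 - p 2) + B * u 2)^2 := by
      simp only [hD, hB, hC]; linear_combination (-(B^2)) * hu'
    have hge : 0 ≤ D := hDeq ▸ spacelike _ _ _ _ _ _ hu'' horth
    rcases hge.lt_or_eq with h | h
    · exact h
    · exfalso
      obtain ⟨e0, e1, e2⟩ := spacelike_eq _ _ _ _ _ _ hu'' hu0 horth
        (by rw [← hDeq, ← h])
      apply hp B
      have hq : ∀ j : Fin 3, (B • u + b) j = B * u j + b j := by
        intro j; simp [smul_eq_mul]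
      funext i
      match i with
      | 0 => rw [hq 0]; linarith
      | 1 => rw [hq 1]; linarith
      | 2 => rw [hq 2]; linarith
  set s : ℝ := Real.sqrt D with hsdef
  have hs : s^2 = D := Real.sq_sqrt hDpos.le
  have hspos : 0 < s := Real.sqrt_pos.2 hDpos
  refine ⟨B + s, ⟨?_, ?_⟩, ?_⟩
  · rw [hval]; linarith
  · -- positivity of 0-component at tr = B + s
    have hzero : eta ((B + s) • u + b - p) ((B + s) • u + b - p) = 0 := by
      rw [hval]; linarith
    have heu' := heu (B + s)
    refine root_pos (u 0) (u 1) (u 2) _ _ _ s hu'' hu0 hzero ?_ hspos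
    rw [heu']; ring
  · -- uniqueness
    rintro t ⟨h1, h2⟩
    have h1' := h1
    rw [hval] at h1'
    have hfac : (t - B - s) * (t - B + s) = 0 := by linear_combination -h1' - hs
    rcases mul_eq_zero.1 hfac with h | h
    · linarith
    · exfalso
      have hteq : t = B - s := by linarith
      have heu' := heu t
      have hneg : (t • u + b - p) 0 < 0 := by
        refine root_neg (u 0) (u 1) (u 2) _ _ _ s hu'' hu0 h1 ?_ hspos
        rw [heu', hteq]; ring
      linarith
end
end

section
/- With the setup data and notation fixed, η(q, q) = 0; moreover, the set of all real δ satisfying η(h(g(t+δ)) − g(t), h(g(t+δ)) − g(t)) = 0 is exactly {s(cosh ρ − 1) − τ + sinh ρ·R, s(cosh ρ − 1) − τ − sinh ρ·R}, so that Δt is the larger of the two solutions. (This is the return-time formula (3.13) of Theorem 3.8.) -/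
noncomputable section

/-- The return-time formula (3.13): `q` is lightlike and the set of solutions of the
quadratic return condition is exactly the pair of roots, of which `Δt` is the larger. -/
theorem return_time_formula
    (x x₀ a : Fin 3 → ℝ) (v : (Fin 3 → ℝ) ≃ₗ[ℝ] (Fin 3 → ℝ))
    (hx : eta x x = -1) (hx0 : 0 < x 0)
    (hv : ∀ u w : Fin 3 → ℝ, eta (v u) (v w) = eta u w)
    (hdet : LinearMap.det v.toLinearMap = 1)
    (horth : ∀ z : Fin 3 → ℝ, eta z z < 0 → 0 < z 0 → 0 < (v z) 0)
    (hvx : v x ≠ x)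
    (ρ σ τ ν : ℝ) (hρ : 0 < ρ) (hcosh : Real.cosh ρ = -eta x (v x))
    (hστν : v x₀ + a - x₀ = σ • (v x - x) + τ • (v x) + ν • mcross x (v x))
    (t s R Δt : ℝ) (hs : s = t + σ) (hR : R = Real.sqrt (s ^ 2 + ν ^ 2))
    (hΔt : Δt = s * (Real.cosh ρ - 1) - τ + Real.sinh ρ * R)
    (q : Fin 3 → ℝ) (hq : q = (v ((t + Δt) • x + x₀) + a) - (t • x + x₀)) :
    eta q q = 0 ∧
    {δ : ℝ | eta ((v ((t + δ) • x + x₀) + a) - (t • x + x₀))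
              ((v ((t + δ) • x + x₀) + a) - (t • x + x₀)) = 0} =
      ({s * (Real.cosh ρ - 1) - τ + Real.sinh ρ * R,
        s * (Real.cosh ρ - 1) - τ - Real.sinh ρ * R} : Set ℝ) ∧
    s * (Real.cosh ρ - 1) - τ - Real.sinh ρ * R ≤ Δt := by
  have hBB : eta (v x) (v x) = -1 := by rw [hv]; exact hx
  have hAB : eta x (v x) = -Real.cosh ρ := by linarith
  set c := Real.cosh ρ with hc
  -- the displacement vector, rewritten
  have hvec : ∀ δ : ℝ, (v ((t + δ) • x + x₀) + a) - (t • x + x₀)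
      = (-(t + σ)) • x + (t + δ + σ + τ) • (v x) + ν • mcross x (v x) := by
    intro δ
    have h1 : v ((t + δ) • x + x₀) = (t + δ) • v x + v x₀ := by
      rw [map_add, map_smul]
    have h2 : (t + δ) • v x + v x₀ + a - (t • x + x₀)
        = (t + δ) • v x + (v x₀ + a - x₀) - t • x := by abel
    rw [h1, h2, hστν]
    module
  -- the quadratic in δ
  have key : ∀ δ : ℝ, eta ((v ((t + δ) • x + x₀) + a) - (t • x + x₀))
      ((v ((t + δ) • x + x₀) + a) - (t • x + x₀))
      = -((δ - (s * (c - 1) - τ)) ^ 2) + (c ^ 2 - 1) * (s ^ 2 + ν ^ 2) := by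
    intro δ
    rw [hvec δ, hs]
    simp only [eta, mcross, Pi.add_apply, Pi.smul_apply, smul_eq_mul,
      Matrix.cons_val_zero, Matrix.cons_val_one, Matrix.head_cons,
      Matrix.cons_val_two, Matrix.tail_cons] at hx hBB hAB ⊢
    linear_combination
      ((-(t + σ)) ^ 2 - ν ^ 2 * (-(v x 0 * v x 0) + v x 1 * v x 1 + v x 2 * v x 2)) * hx
      + ((t + δ + σ + τ) ^ 2 + ν ^ 2) * hBB
      + (2 * (-(t + σ)) * (t + δ + σ + τ)
          + ν ^ 2 * ((-(x 0 * v x 0) + x 1 * v x 1 + x 2 * v x 2) - c)) * hAB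
  have hR2 : R ^ 2 = s ^ 2 + ν ^ 2 := by rw [hR]; exact Real.sq_sqrt (by positivity)
  have hsinh : Real.sinh ρ ^ 2 = c ^ 2 - 1 := by rw [hc, Real.sinh_sq]
  have hprod : (c ^ 2 - 1) * (s ^ 2 + ν ^ 2) = (Real.sinh ρ * R) ^ 2 := by
    rw [mul_pow, hsinh, hR2]
  have hroots : ∀ δ : ℝ, -((δ - (s * (c - 1) - τ)) ^ 2) + (c ^ 2 - 1) * (s ^ 2 + ν ^ 2)
      = -((δ - (s * (c - 1) - τ + Real.sinh ρ * R))
          * (δ - (s * (c - 1) - τ - Real.sinh ρ * R))) := by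
    intro δ
    linear_combination hprod
  refine ⟨?_, ?_, ?_⟩
  · rw [hq, key Δt, hroots Δt, hΔt]; ring
  · ext δ
    simp only [Set.mem_setOf_eq, Set.mem_insert_iff, Set.mem_singleton_iff]
    rw [key δ, hroots δ, neg_eq_zero, mul_eq_zero, sub_eq_zero, sub_eq_zero]
  · have h1 : 0 ≤ Real.sinh ρ := by positivity
    have h2 : 0 ≤ R := hR ▸ Real.sqrt_nonneg _
    rw [hΔt]
    nlinarith [mul_nonneg h1 h2]
end
end

section
/- With the setup data and notation fixed, assume in addition that w := h(g(t)) − g(t) is spacelike, i.e. η(w,w) > 0. Then Δt = s(cosh ρ − 1) − τ + sinh ρ·R is the unique positive real number δ satisfying η(h(g(t+δ)) − g(t), h(g(t+δ)) − g(t)) = 0. -/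
noncomputable section

set_option maxHeartbeats 1000000 in
/-- If the worldline and its holonomy image are spacelike separated at emission time `t`,
then `Δt` is the unique positive solution of the return condition (Definition 3.5). -/
theorem return_time_unique_positive
    (x x₀ a : Fin 3 → ℝ) (v : (Fin 3 → ℝ) ≃ₗ[ℝ] (Fin 3 → ℝ))
    (hx : eta x x = -1) (hx0 : 0 < x 0)
    (hv : ∀ u w : Fin 3 → ℝ, eta (v u) (v w) = eta u w)
    (hdet : LinearMap.det v.toLinearMap = 1)
    (horth : ∀ z : Fin 3 → ℝ, eta z z < 0 → 0 < z 0 → 0 < (v z) 0)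
    (hvx : v x ≠ x)
    (ρ σ τ ν : ℝ) (hρ : 0 < ρ) (hcosh : Real.cosh ρ = -eta x (v x))
    (hστν : v x₀ + a - x₀ = σ • (v x - x) + τ • (v x) + ν • mcross x (v x))
    (t s R Δt : ℝ) (hs : s = t + σ) (hR : R = Real.sqrt (s ^ 2 + ν ^ 2))
    (hΔt : Δt = s * (Real.cosh ρ - 1) - τ + Real.sinh ρ * R)
    (q : Fin 3 → ℝ) (hq : q = (v ((t + Δt) • x + x₀) + a) - (t • x + x₀))
    (hw : eta ((v (t • x + x₀) + a) - (t • x + x₀)) ((v (t • x + x₀) + a) - (t • x + x₀)) > 0) :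
    0 < Δt ∧ ∀ δ : ℝ,
      (0 < δ ∧ eta ((v ((t + δ) • x + x₀) + a) - (t • x + x₀))
                ((v ((t + δ) • x + x₀) + a) - (t • x + x₀)) = 0) ↔ δ = Δt := by
  subst hs
  set c := Real.cosh ρ with hc
  set sh := Real.sinh ρ with hsh
  set e := mcross x (v x) with he
  have hvv : eta (v x) (v x) = -1 := by rw [hv]; exact hx
  have hP : eta x (v x) = -c := by linarith
  have hE1 : eta e x = 0 := by
    simp only [he, eta, mcross, Matrix.cons_val_zero, Matrix.cons_val_one, Matrix.head_cons,
      Matrix.cons_val_two, Matrix.tail_cons]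
    ring
  have hE2 : eta e (v x) = 0 := by
    simp only [he, eta, mcross, Matrix.cons_val_zero, Matrix.cons_val_one, Matrix.head_cons,
      Matrix.cons_val_two, Matrix.tail_cons]
    ring
  have hE3 : eta e e = eta x (v x) ^ 2 - eta x x * eta (v x) (v x) := by
    simp only [he, eta, mcross, Matrix.cons_val_zero, Matrix.cons_val_one, Matrix.head_cons,
      Matrix.cons_val_two, Matrix.tail_cons]
    ring
  have hE3' : eta e e = c ^ 2 - 1 := by rw [hE3, hP, hx, hvv]; ring
  -- pointwise formula for the separation vector
  have hq' : ∀ δ : ℝ, (v ((t + δ) • x + x₀) + a) - (t • x + x₀) =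
      fun i => (δ + (t + σ) + τ) * (v x) i + (-(t + σ)) * x i + ν * e i := by
    intro δ
    funext i
    have h1 := congrFun hστν i
    have h2 : v ((t + δ) • x + x₀) = (t + δ) • (v x) + v x₀ := by
      rw [map_add, map_smul]
    rw [h2]
    simp only [Pi.add_apply, Pi.sub_apply, Pi.smul_apply, smul_eq_mul] at h1 ⊢
    linear_combination h1
  -- the quadratic expression
  have hQ : ∀ δ : ℝ, eta ((v ((t + δ) • x + x₀) + a) - (t • x + x₀))
      ((v ((t + δ) • x + x₀) + a) - (t • x + x₀)) =
      -((δ + (t + σ) + τ) - (t + σ) * c) ^ 2 + (c ^ 2 - 1) * ((t + σ) ^ 2 + ν ^ 2) := by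
    intro δ
    rw [hq' δ]
    simp only [eta] at hx hvv hP hE1 hE2 hE3' ⊢
    linear_combination ((δ + (t + σ) + τ)) ^ 2 * hvv + (t + σ) ^ 2 * hx + ν ^ 2 * hE3'
      + (-2 * (δ + (t + σ) + τ) * (t + σ)) * hP + (2 * (δ + (t + σ) + τ) * ν) * hE2
      + (-2 * (t + σ) * ν) * hE1
  have hsh0 : 0 < sh := Real.sinh_pos_iff.mpr hρ
  have hR0 : 0 ≤ R := hR ▸ Real.sqrt_nonneg _
  have hR2 : R ^ 2 = (t + σ) ^ 2 + ν ^ 2 := by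
    rw [hR]; exact Real.sq_sqrt (by positivity)
  have hshsq : sh ^ 2 = c ^ 2 - 1 := by
    have := Real.cosh_sq ρ; rw [← hc, ← hsh] at this; linarith
  have hT : (c ^ 2 - 1) * ((t + σ) ^ 2 + ν ^ 2) = (sh * R) ^ 2 := by
    rw [mul_pow, hshsq, hR2]
  -- spacelike at emission time gives F(0) > 0
  have hw0 := hQ 0
  simp only [add_zero] at hw0
  rw [hw0, hT] at hw
  have hK2 : ((t + σ) + τ - (t + σ) * c) ^ 2 < (sh * R) ^ 2 := by nlinarith [hw]
  have hΔt' : Δt + ((t + σ) + τ - (t + σ) * c) = sh * R := by rw [hΔt]; ring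
  have hsR : 0 ≤ sh * R := mul_nonneg hsh0.le hR0
  have hΔtpos : 0 < Δt := by nlinarith [hK2, hΔt', hsR]
  refine ⟨hΔtpos, fun δ => ?_⟩
  constructor
  · rintro ⟨hδpos, hδeq⟩
    rw [hQ δ, hT] at hδeq
    have hfac : ((δ + ((t + σ) + τ - (t + σ) * c)) - sh * R) *
        ((δ + ((t + σ) + τ - (t + σ) * c)) + sh * R) = 0 := by linear_combination -hδeq
    rcases mul_eq_zero.mp hfac with h | h
    · linarith
    · nlinarith [hK2, hsR]
  · rintro rfl
    refine ⟨hΔtpos, ?_⟩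
    rw [hQ δ, hT]
    linear_combination (-(δ + ((t + σ) + τ - (t + σ) * c) + sh * R)) * hΔt'
end
end

section
/- With the setup data and notation fixed, assume (s, ν) ≠ (0, 0). Then η(vx, q) = −sinh ρ·R and η(x, q) = −(s·sinh²ρ + cosh ρ·sinh ρ·R), and consequently the frequency ratio of Definition 3.7 satisfies f_r/f_e = η(vx, q)/η(x, q) = R/(cosh ρ·R + sinh ρ·s), which is formula (3.18) of Theorem 3.8. -/
noncomputable section

/-- The frequency shift formula (3.18): `f_r/f_e = η(vx,q)/η(x,q) = R/(cosh ρ·R + sinh ρ·s)`. -/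
theorem frequency_shift_formula
    (x x₀ a : Fin 3 → ℝ) (v : (Fin 3 → ℝ) ≃ₗ[ℝ] (Fin 3 → ℝ))
    (hx : eta x x = -1) (hx0 : 0 < x 0)
    (hv : ∀ u w : Fin 3 → ℝ, eta (v u) (v w) = eta u w)
    (hdet : LinearMap.det v.toLinearMap = 1)
    (horth : ∀ z : Fin 3 → ℝ, eta z z < 0 → 0 < z 0 → 0 < (v z) 0)
    (hvx : v x ≠ x)
    (ρ σ τ ν : ℝ) (hρ : 0 < ρ) (hcosh : Real.cosh ρ = -eta x (v x))
    (hστν : v x₀ + a - x₀ = σ • (v x - x) + τ • (v x) + ν • mcross x (v x))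
    (t s R Δt : ℝ) (hs : s = t + σ) (hR : R = Real.sqrt (s ^ 2 + ν ^ 2))
    (hΔt : Δt = s * (Real.cosh ρ - 1) - τ + Real.sinh ρ * R)
    (q : Fin 3 → ℝ) (hq : q = (v ((t + Δt) • x + x₀) + a) - (t • x + x₀))
    (hsν : ¬(s = 0 ∧ ν = 0)) :
    eta (v x) q = -(Real.sinh ρ * R) ∧
    eta x q = -(s * Real.sinh ρ ^ 2 + Real.cosh ρ * Real.sinh ρ * R) ∧
    eta (v x) q / eta x q = R / (Real.cosh ρ * R + Real.sinh ρ * s) := by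

  -- decompose q
  have hvlin : v ((t + Δt) • x + x₀) = (t + Δt) • v x + v x₀ := by
    simp [map_add, map_smul]
  have hq2 : q = (t + Δt) • v x - t • x + (σ • (v x - x) + τ • (v x) + ν • mcross x (v x)) := by
    rw [hq, hvlin, ← hστν]; abel
  have hq' : q = (s * Real.cosh ρ + Real.sinh ρ * R) • v x + (-s) • x + ν • mcross x (v x) := by
    rw [hq2, hΔt, hs]; module
  have hsymm : ∀ u w : Fin 3 → ℝ, eta u w = eta w u := by
    intro u w; simp [eta]; ring
  have hlin : ∀ (z u w m : Fin 3 → ℝ) (a b c : ℝ),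
      eta z (a • u + b • w + c • m) = a * eta z u + b * eta z w + c * eta z m := by
    intro z u w m a b c
    simp [eta, Pi.add_apply, Pi.smul_apply, smul_eq_mul]; ring
  have hA : eta (v x) (v x) = -1 := by rw [hv]; exact hx
  have hE : eta x (v x) = -Real.cosh ρ := by linarith [hcosh]
  have hB : eta (v x) x = -Real.cosh ρ := by rw [hsymm]; exact hE
  have hC : eta (v x) (mcross x (v x)) = 0 := by simp [eta, mcross]; ring
  have hD : eta x (mcross x (v x)) = 0 := by simp [eta, mcross]; ring
  have e1 : eta (v x) q = -(Real.sinh ρ * R) := by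
    rw [hq', hlin, hA, hB, hC]; ring
  have e2 : eta x q = -(s * Real.sinh ρ ^ 2 + Real.cosh ρ * Real.sinh ρ * R) := by
    rw [hq', hlin, hx, hE, hD]
    linear_combination (-s) * Real.cosh_sq_sub_sinh_sq ρ
  refine ⟨e1, e2, ?_⟩
  -- positivity of denominator
  have hsinh : 0 < Real.sinh ρ := Real.sinh_pos_iff.mpr hρ
  have hcs : Real.sinh ρ < Real.cosh ρ := Real.sinh_lt_cosh ρ
  have hsν' : 0 < s ^ 2 + ν ^ 2 := by
    rcases not_and_or.mp hsν with h | h <;> positivity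
  have hRpos : 0 < R := by rw [hR]; positivity
  have hRs : |s| ≤ R := by
    rw [hR, ← Real.sqrt_sq_eq_abs]
    exact Real.sqrt_le_sqrt (by nlinarith)
  have habs := abs_le.mp hRs
  have hDpos : 0 < Real.cosh ρ * R + Real.sinh ρ * s := by nlinarith
  have hetaxq : eta x q = -(Real.sinh ρ * (Real.cosh ρ * R + Real.sinh ρ * s)) := by
    rw [e2]; ring
  rw [e1, hetaxq]
  rw [div_eq_div_iff (by nlinarith) (ne_of_gt hDpos)]
  ring
end
end

section
/- With the setup data and notation fixed, the η-orthogonal projection of q onto the orthogonal complement of x, namely Π(q) := q + η(q,x)·x, satisfies Π(q) = (s·cosh ρ + sinh ρ·R)·(vx + η(x,vx)·x) + ν·(x∧vx). In particular, the direction of emission of the returning lightray lies in the plane spanned by the unit spacelike vectors (vx + η(x,vx)x)/sinh ρ and (x∧vx)/sinh ρ, with its component along x∧vx equal to ν. -/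
noncomputable section

lemma mcross_norm (x y : Fin 3 → ℝ) :
    eta (mcross x y) (mcross x y) = (eta x y) ^ 2 - eta x x * eta y y := by
  simp [eta, mcross]; ring

lemma eta_smul_smul (r t : ℝ) (u w : Fin 3 → ℝ) :
    eta (r • u) (t • w) = r * t * eta u w := by
  simp [eta]; ring

lemma eta_comm (u w : Fin 3 → ℝ) : eta u w = eta w u := by
  simp [eta]; ring

/-- The direction of emission (3.14): the projection of `q` onto `x^⊥` decomposes in the
plane spanned by the unit spacelike vectors `(vx + η(x,vx)x)/sinh ρ` and `(x∧vx)/sinh ρ`,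
with `x∧vx`-component equal to `ν`. -/
theorem emission_direction_formula
    (x x₀ a : Fin 3 → ℝ) (v : (Fin 3 → ℝ) ≃ₗ[ℝ] (Fin 3 → ℝ))
    (hx : eta x x = -1) (hx0 : 0 < x 0)
    (hv : ∀ u w : Fin 3 → ℝ, eta (v u) (v w) = eta u w)
    (hdet : LinearMap.det v.toLinearMap = 1)
    (horth : ∀ z : Fin 3 → ℝ, eta z z < 0 → 0 < z 0 → 0 < (v z) 0)
    (hvx : v x ≠ x)
    (ρ σ τ ν : ℝ) (hρ : 0 < ρ) (hcosh : Real.cosh ρ = -eta x (v x))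
    (hστν : v x₀ + a - x₀ = σ • (v x - x) + τ • (v x) + ν • mcross x (v x))
    (t s R Δt : ℝ) (hs : s = t + σ) (hR : R = Real.sqrt (s ^ 2 + ν ^ 2))
    (hΔt : Δt = s * (Real.cosh ρ - 1) - τ + Real.sinh ρ * R)
    (q : Fin 3 → ℝ) (hq : q = (v ((t + Δt) • x + x₀) + a) - (t • x + x₀)) :
    q + eta q x • x
      = (s * Real.cosh ρ + Real.sinh ρ * R) • (v x + eta x (v x) • x)
        + ν • mcross x (v x) ∧
    eta ((Real.sinh ρ)⁻¹ • (v x + eta x (v x) • x))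
        ((Real.sinh ρ)⁻¹ • (v x + eta x (v x) • x)) = 1 ∧
    eta ((Real.sinh ρ)⁻¹ • mcross x (v x)) ((Real.sinh ρ)⁻¹ • mcross x (v x)) = 1 := by
  have hsinh : Real.sinh ρ ≠ 0 := Real.sinh_ne_zero.2 (ne_of_gt hρ)
  have hc2 : Real.cosh ρ ^ 2 = Real.sinh ρ ^ 2 + 1 := Real.cosh_sq ρ
  have hxy : eta x (v x) = -Real.cosh ρ := by linarith
  have hyy : eta (v x) (v x) = -1 := by rw [hv x x]; exact hx
  -- q as a linear combination of v x, x, and mcross x (v x)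
  rw [map_add, map_smul] at hq
  have hq' : q = (s * Real.cosh ρ + Real.sinh ρ * R) • (v x) + (-s) • x
      + ν • mcross x (v x) := by
    funext i
    have hi := congrFun hστν i
    have hqi := congrFun hq i
    simp only [Pi.add_apply, Pi.sub_apply, Pi.smul_apply, smul_eq_mul, Pi.neg_apply] at hi hqi ⊢
    rw [hqi, hs, hΔt, hs]
    linear_combination hi
  -- eta q x
  have hqx : eta q x = -((s * Real.cosh ρ + Real.sinh ρ * R) * Real.cosh ρ) + s := by
    rw [hq']
    have e1 := hxy
    simp only [eta, mcross, Pi.add_apply, Pi.smul_apply, smul_eq_mul,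
      Matrix.cons_val_zero, Matrix.cons_val_one, Matrix.head_cons,
      Matrix.cons_val_two, Matrix.tail_cons] at e1 hx ⊢
    linear_combination (s * Real.cosh ρ + Real.sinh ρ * R) * e1 - s * hx
  refine ⟨?_, ?_, ?_⟩
  · rw [hqx, hq', hxy]
    funext i
    simp only [Pi.add_apply, Pi.smul_apply, smul_eq_mul]
    ring
  · rw [hxy, eta_smul_smul]
    have key : eta (v x + -Real.cosh ρ • x) (v x + -Real.cosh ρ • x)
        = Real.sinh ρ ^ 2 := by
      have e1 := hxy
      simp only [eta, Pi.add_apply, Pi.smul_apply, smul_eq_mul] at e1 hx hyy ⊢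
      linear_combination hyy - 2 * Real.cosh ρ * e1 + Real.cosh ρ ^ 2 * hx + hc2
    rw [key]
    field_simp
  · rw [eta_smul_smul, mcross_norm, hxy, hx, hyy]
    have : (-Real.cosh ρ) ^ 2 - (-1 : ℝ) * (-1) = Real.sinh ρ ^ 2 := by
      linarith
    rw [this]
    field_simp
end
end

section
/- With the setup data and notation fixed, the η-orthogonal projection of v⁻¹q onto the orthogonal complement of x satisfies v⁻¹q + η(v⁻¹q, x)·x = −s·(v⁻¹x + η(x, v⁻¹x)·x) − ν·(x ∧ v⁻¹x), where η(x, v⁻¹x) = η(vx, x) = −cosh ρ. In particular, the direction of return of the lightray lies in the plane spanned by v⁻¹x + η(x,v⁻¹x)x and x∧v⁻¹x, and the ratio of its x∧v⁻¹x-component to its (v⁻¹x + η(x,v⁻¹x)x)-component equals ν/(t+σ), i.e. tan φ_r = ν/(t+σ) as in formulas (3.16)–(3.17) of Theorem 3.8. -/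
noncomputable section

private lemma decomp3 (u : Fin 3 → ℝ) :
    u = u 0 • (Pi.single 0 1 : Fin 3 → ℝ) + u 1 • (Pi.single 1 1 : Fin 3 → ℝ)
      + u 2 • (Pi.single 2 1 : Fin 3 → ℝ) := by
  funext i
  fin_cases i <;> simp [Pi.single_apply]

private lemma mcross_swap (a b : Fin 3 → ℝ) : mcross a b = -(mcross b a) := by
  funext i; fin_cases i <;> simp [mcross] <;> ring

private lemma eta_nondeg (u : Fin 3 → ℝ) (h : ∀ w, eta u w = 0) : u = 0 := by
  have h0 := h (Pi.single 0 1)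
  have h1 := h (Pi.single 1 1)
  have h2 := h (Pi.single 2 1)
  simp [eta, Pi.single_apply] at h0 h1 h2
  funext i
  fin_cases i <;> simp [h0, h1, h2]

/-- The direction of return (3.16)-(3.17): the projection of `v⁻¹q` onto `x^⊥` lies in the
plane spanned by `v⁻¹x + η(x,v⁻¹x)x` and `x∧v⁻¹x`, with component ratio `ν/(t+σ)`. -/
theorem return_direction_formula
    (x x₀ a : Fin 3 → ℝ) (v : (Fin 3 → ℝ) ≃ₗ[ℝ] (Fin 3 → ℝ))
    (hx : eta x x = -1) (hx0 : 0 < x 0)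
    (hv : ∀ u w : Fin 3 → ℝ, eta (v u) (v w) = eta u w)
    (hdet : LinearMap.det v.toLinearMap = 1)
    (horth : ∀ z : Fin 3 → ℝ, eta z z < 0 → 0 < z 0 → 0 < (v z) 0)
    (hvx : v x ≠ x)
    (ρ σ τ ν : ℝ) (hρ : 0 < ρ) (hcosh : Real.cosh ρ = -eta x (v x))
    (hστν : v x₀ + a - x₀ = σ • (v x - x) + τ • (v x) + ν • mcross x (v x))
    (t s R Δt : ℝ) (hs : s = t + σ) (hR : R = Real.sqrt (s ^ 2 + ν ^ 2))
    (hΔt : Δt = s * (Real.cosh ρ - 1) - τ + Real.sinh ρ * R)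
    (q : Fin 3 → ℝ) (hq : q = (v ((t + Δt) • x + x₀) + a) - (t • x + x₀)) :
    v.symm q + eta (v.symm q) x • x
      = (-s) • (v.symm x + eta x (v.symm x) • x) - ν • mcross x (v.symm x) ∧
    eta x (v.symm x) = eta (v x) x ∧
    eta (v x) x = -Real.cosh ρ ∧
    (s ≠ 0 → (-ν) / (-s) = ν / (t + σ)) := by
  subst hs
  -- matrix entries of v
  have hMj : ∀ (i j : Fin 3), (LinearMap.toMatrix' v.toLinearMap) i j = v (Pi.single j 1) i := by
    intro i j
    rw [LinearMap.toMatrix'_apply]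
    have h1 : (fun j' => if j' = j then (1:ℝ) else 0) = (Pi.single j 1 : Fin 3 → ℝ) := by
      funext j'; simp [Pi.single_apply]
    rfl
  have hexp : ∀ (u : Fin 3 → ℝ) (i : Fin 3), v u i =
      u 0 * (LinearMap.toMatrix' v.toLinearMap) i 0
      + u 1 * (LinearMap.toMatrix' v.toLinearMap) i 1
      + u 2 * (LinearMap.toMatrix' v.toLinearMap) i 2 := by
    intro u i
    rw [hMj i 0, hMj i 1, hMj i 2]
    conv_lhs => rw [decomp3 u]
    simp [map_add, map_smul]
  have hdetM : (LinearMap.toMatrix' v.toLinearMap).det = 1 := by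
    rw [LinearMap.det_toMatrix']; exact hdet
  rw [Matrix.det_fin_three] at hdetM
  -- v preserves the cross product
  have hmul : ∀ a b c : Fin 3 → ℝ,
      eta (mcross (v a) (v b)) (v c) = eta (mcross a b) c := by
    intro a b c
    simp only [eta, mcross, Matrix.cons_val_zero, Matrix.cons_val_one, Matrix.head_cons,
      Matrix.cons_val_two, Matrix.tail_cons]
    rw [hexp a 0, hexp a 1, hexp a 2, hexp b 0, hexp b 1, hexp b 2,
      hexp c 0, hexp c 1, hexp c 2]
    linear_combination (a 0 * (b 1 * c 2 - b 2 * c 1) - a 1 * (b 0 * c 2 - b 2 * c 0)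
      + a 2 * (b 0 * c 1 - b 1 * c 0)) * hdetM
  have hcross : ∀ a b : Fin 3 → ℝ, v (mcross a b) = mcross (v a) (v b) := by
    intro a b
    have hz : ∀ w, eta (v (mcross a b) - mcross (v a) (v b)) w = 0 := by
      intro w
      have h1 : eta (v (mcross a b)) w = eta (mcross a b) (v.symm w) := by
        have := hv (mcross a b) (v.symm w)
        rwa [v.apply_symm_apply] at this
      have h2 : eta (mcross (v a) (v b)) w = eta (mcross a b) (v.symm w) := by
        have := hmul a b (v.symm w)
        rwa [v.apply_symm_apply] at this
      have h3 : eta (v (mcross a b) - mcross (v a) (v b)) w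
          = eta (v (mcross a b)) w - eta (mcross (v a) (v b)) w := by
        simp only [eta, Pi.sub_apply]; ring
      rw [h3, h1, h2]; ring
    exact sub_eq_zero.mp (eta_nondeg _ hz)
  have hkey : v.symm (mcross x (v x)) = -(mcross x (v.symm x)) := by
    have h1 := hcross (v.symm x) x
    rw [v.apply_symm_apply] at h1
    have h2 := congrArg v.symm h1
    rw [v.symm_apply_apply] at h2
    rw [← h2, mcross_swap]
  -- explicit form of q
  have hq1 : q = (t + Δt + σ + τ) • (v x) - (t + σ) • x + ν • mcross x (v x) := by
    rw [hq, map_add, map_smul]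
    funext i
    have h2i := congrFun hστν i
    simp only [Pi.add_apply, Pi.sub_apply, Pi.smul_apply, smul_eq_mul] at h2i ⊢
    linear_combination h2i
  have hq2 : v.symm q = (t + Δt + σ + τ) • x - (t + σ) • v.symm x
      - ν • mcross x (v.symm x) := by
    rw [hq1, map_add, map_sub, map_smul, map_smul, map_smul, v.symm_apply_apply, hkey,
      smul_neg]
    abel
  refine ⟨?_, ?_, ?_, ?_⟩
  · rw [hq2]
    have hx' : -(x 0 * x 0) + x 1 * x 1 + x 2 * x 2 = -1 := hx
    have hfun : ∀ (f g : Fin 3 → ℝ), f 0 = g 0 → f 1 = g 1 → f 2 = g 2 → f = g := by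
      intro f g h0 h1 h2; funext i; fin_cases i <;> assumption
    refine hfun _ _ ?_ ?_ ?_ <;>
      simp only [eta, mcross, Pi.add_apply, Pi.sub_apply, Pi.smul_apply, Pi.neg_apply,
        smul_eq_mul, Matrix.cons_val_zero, Matrix.cons_val_one, Matrix.head_cons,
        Matrix.cons_val_two, Matrix.tail_cons, Fin.isValue]
    · linear_combination ((t + Δt + σ + τ) * x 0) * hx'
    · linear_combination ((t + Δt + σ + τ) * x 1) * hx'
    · linear_combination ((t + Δt + σ + τ) * x 2) * hx'
  · have h := hv x (v.symm x)
    rw [v.apply_symm_apply] at h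
    exact h.symm
  · rw [hcosh]
    simp only [eta]; ring
  · intro _
    rw [neg_div_neg_eq]
end
end

section
/- With the setup data and notation fixed, suppose σ = τ = ν = 0 (the conformally static case with worldline through the tip of the lightcone) and t > 0. Then: (i) Δt = t(e^ρ − 1); (ii) η(vx, q)/η(x, q) = e^{−ρ}; (iii) the projection q + η(q,x)x is a positive scalar multiple of vx + η(x,vx)x, and the projection v⁻¹q + η(v⁻¹q,x)x is a scalar multiple of v⁻¹x + η(x,v⁻¹x)x (both x∧vx- resp. x∧v⁻¹x-components vanish, i.e. the angles of emission and return are zero). These are formulas (4.1) of the paper. -/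
noncomputable section

lemma eta_comm_s11 (x y : Fin 3 → ℝ) : eta x y = eta y x := by
  unfold eta; ring

lemma eta_lin (u w z : Fin 3 → ℝ) (b c : ℝ) :
    eta u (b • w - c • z) = b * eta u w - c * eta u z := by
  simp [eta, Pi.sub_apply, Pi.smul_apply, smul_eq_mul]; ring

/-- The conformally static case (4.1): for `σ = τ = ν = 0` and `t > 0`, the return time is
`t(e^ρ - 1)`, the frequency ratio is `e^{-ρ}`, and the emission and return angles vanish. -/
theorem conformally_static_measurements
    (x x₀ a : Fin 3 → ℝ) (v : (Fin 3 → ℝ) ≃ₗ[ℝ] (Fin 3 → ℝ))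
    (hx : eta x x = -1) (hx0 : 0 < x 0)
    (hv : ∀ u w : Fin 3 → ℝ, eta (v u) (v w) = eta u w)
    (hdet : LinearMap.det v.toLinearMap = 1)
    (horth : ∀ z : Fin 3 → ℝ, eta z z < 0 → 0 < z 0 → 0 < (v z) 0)
    (hvx : v x ≠ x)
    (ρ σ τ ν : ℝ) (hρ : 0 < ρ) (hcosh : Real.cosh ρ = -eta x (v x))
    (hστν : v x₀ + a - x₀ = σ • (v x - x) + τ • (v x) + ν • mcross x (v x))
    (t s R Δt : ℝ) (hs : s = t + σ) (hR : R = Real.sqrt (s ^ 2 + ν ^ 2))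
    (hΔt : Δt = s * (Real.cosh ρ - 1) - τ + Real.sinh ρ * R)
    (q : Fin 3 → ℝ) (hq : q = (v ((t + Δt) • x + x₀) + a) - (t • x + x₀))
    (hσ0 : σ = 0) (hτ0 : τ = 0) (hν0 : ν = 0) (ht : 0 < t) :
    Δt = t * (Real.exp ρ - 1) ∧
    eta (v x) q / eta x q = Real.exp (-ρ) ∧
    (∃ c : ℝ, 0 < c ∧ q + eta q x • x = c • (v x + eta x (v x) • x)) ∧
    (∃ c' : ℝ, v.symm q + eta (v.symm q) x • x = c' • (v.symm x + eta x (v.symm x) • x)) := by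
  set E := Real.exp ρ with hE
  set F := Real.exp (-ρ) with hF
  have hEF : E * F = 1 := by
    rw [hE, hF, ← Real.exp_add]; simp
  have hE1 : 1 < E := by
    rw [hE, show (1:ℝ) = Real.exp 0 from Real.exp_zero.symm]
    exact Real.exp_lt_exp.mpr hρ
  have hcoshEF : Real.cosh ρ = (E + F) / 2 := Real.cosh_eq ρ
  have hsinhEF : Real.sinh ρ = (E - F) / 2 := Real.sinh_eq ρ
  -- Part (i)
  have hst : s = t := by rw [hs, hσ0, add_zero]
  have hRt : R = t := by
    rw [hR, hν0, hst]; norm_num; exact Real.sqrt_sq ht.le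
  have hΔ : Δt = t * (E - 1) := by
    rw [hΔt, hst, hRt, hτ0, hcoshEF, hsinhEF]
    have : E * F = 1 := hEF
    linear_combination (t / 2) * this - (t/2) * hEF
  have htΔ : t + Δt = t * E := by rw [hΔ]; ring
  -- the translation part vanishes
  have ha : v x₀ + a = x₀ := by
    rw [hσ0, hτ0, hν0] at hστν
    simp only [zero_smul, add_zero, zero_add] at hστν
    exact sub_eq_zero.mp hστν
  -- explicit formula for q
  have hq2 : q = (t * E) • (v x) - t • x := by
    rw [hq, map_add, map_smul, htΔ]
    have : (t * E) • (v x) + v x₀ + a = (t * E) • (v x) + x₀ := by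
      rw [add_assoc, ha]
    rw [this]; abel
  -- eta values
  have hvv : eta (v x) (v x) = -1 := by rw [hv]; exact hx
  have hxvx : eta x (v x) = -Real.cosh ρ := by linarith
  have hvxx : eta (v x) x = -Real.cosh ρ := by rw [eta_comm_s11]; exact hxvx
  have hvq : eta (v x) q = t * (F - E) / 2 := by
    rw [hq2, eta_lin, hvv, hvxx, hcoshEF]
    ring
  have hvq' : eta (v x) q = t * (F - E) / 2 := hvq
  have hxq : eta x q = t * (1 - E * E) / 2 := by
    rw [hq2, eta_lin, hxvx, hx, hcoshEF]
    linear_combination (-t / 2) * hEF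
  have hE0 : (0:ℝ) ≠ E := by linarith
  have hxq0 : eta x q ≠ 0 := by
    rw [hxq]
    have : 1 - E * E < 0 := by nlinarith
    intro h
    nlinarith
  refine ⟨hΔ, ?_, ?_, ?_⟩
  · -- frequency ratio
    rw [div_eq_iff hxq0, hvq, hxq]
    linear_combination (t * E / 2) * hEF
  · -- emission angle
    refine ⟨t * E, by positivity, ?_⟩
    have hqx : eta q x = t * (1 - E * E) / 2 := by rw [eta_comm_s11]; exact hxq
    rw [hqx, hxvx, hcoshEF, hq2]
    match_scalars
    · ring
    · linear_combination (t / 2) * hEF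
  · -- return angle
    refine ⟨-t, ?_⟩
    have hvsq : v.symm q = (t * E) • x - t • (v.symm x) := by
      rw [hq2, map_sub, map_smul, map_smul, v.symm_apply_apply]
    have hsx : eta (v.symm x) x = -Real.cosh ρ := by
      have := hv (v.symm x) x
      rw [v.apply_symm_apply] at this
      rw [← this]; exact hxvx
    have hxs : eta x (v.symm x) = -Real.cosh ρ := by rw [eta_comm_s11]; exact hsx
    have hvsqx : eta (v.symm q) x = t * (F - E) / 2 := by
      rw [hvsq, eta_comm_s11, eta_lin, eta_comm_s11 x x, hx, eta_comm_s11 x (v.symm x), hsx, hcoshEF]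
      linear_combination (t / 2) * hEF - (t/2) * hEF
    rw [hvsqx, hxs, hcoshEF, hvsq]
    match_scalars <;> ring
end
end

section
/- Let ρ > 0 and σ, τ, ν ∈ ℝ, and define Δt(t) = (t+σ)(cosh ρ − 1) − τ + sinh ρ·√((t+σ)² + ν²) and, for sufficiently large t (so that 1 + Δt(t)/t > 0), the modified distance ρ̃(t) = ln(1 + Δt(t)/t). Then lim_{t→∞} t·(ρ̃(t) − ρ) = e^{−ρ}·(σ(e^ρ − 1) − τ). In particular ρ̃(t) → ρ as t → ∞, so the observer recovers the hyperbolic translation length ρ and the combination σ(e^ρ − 1) − τ of the holonomy parameters from the large-time behaviour of the return times. -/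
noncomputable section
open Filter Real

lemma sqrt_sq_add_sub_tendsto (ν : ℝ) :
    Tendsto (fun s : ℝ => Real.sqrt (s ^ 2 + ν ^ 2) - s) atTop (nhds 0) := by
  have hbound : Tendsto (fun s : ℝ => ν ^ 2 / (2 * s)) atTop (nhds 0) := by
    apply Tendsto.div_atTop tendsto_const_nhds
    exact Tendsto.const_mul_atTop two_pos tendsto_id
  refine tendsto_of_tendsto_of_tendsto_of_le_of_le' tendsto_const_nhds hbound ?_ ?_
  · filter_upwards [eventually_ge_atTop (1:ℝ)] with s hs
    have h1 : s ≤ Real.sqrt (s ^ 2 + ν ^ 2) := by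
      have := Real.sqrt_le_sqrt (show s ^ 2 ≤ s ^ 2 + ν ^ 2 by nlinarith)
      rwa [Real.sqrt_sq (by linarith)] at this
    linarith
  · filter_upwards [eventually_ge_atTop (1:ℝ)] with s hs
    have hs0 : (0:ℝ) < s := by linarith
    have key : Real.sqrt (s ^ 2 + ν ^ 2) ≤ s + ν ^ 2 / (2 * s) := by
      have h2 : s ^ 2 + ν ^ 2 ≤ (s + ν ^ 2 / (2 * s)) ^ 2 := by
        have : (s + ν ^ 2 / (2 * s)) ^ 2 = s ^ 2 + ν ^ 2 + (ν ^ 2 / (2 * s)) ^ 2 := by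
          field_simp; ring
        nlinarith [sq_nonneg (ν ^ 2 / (2 * s))]
      calc Real.sqrt (s ^ 2 + ν ^ 2) ≤ Real.sqrt ((s + ν ^ 2 / (2 * s)) ^ 2) :=
            Real.sqrt_le_sqrt h2
        _ = s + ν ^ 2 / (2 * s) := Real.sqrt_sq (by positivity)
    linarith

/-- First-order asymptotics (4.7) of the modified distance `ρ̃(t) = ln(1 + Δt(t)/t)`:
`t·(ρ̃(t) - ρ) → e^{-ρ}(σ(e^ρ - 1) - τ)`, and in particular `ρ̃(t) → ρ`. -/
theorem modified_distance_asymptotics (ρ σ τ ν : ℝ) (hρ : 0 < ρ) :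
    Filter.Tendsto
      (fun t : ℝ => t * (Real.log (1 + ((t + σ) * (Real.cosh ρ - 1) - τ
        + Real.sinh ρ * Real.sqrt ((t + σ) ^ 2 + ν ^ 2)) / t) - ρ))
      Filter.atTop (nhds (Real.exp (-ρ) * (σ * (Real.exp ρ - 1) - τ))) ∧
    Filter.Tendsto
      (fun t : ℝ => Real.log (1 + ((t + σ) * (Real.cosh ρ - 1) - τ
        + Real.sinh ρ * Real.sqrt ((t + σ) ^ 2 + ν ^ 2)) / t))
      Filter.atTop (nhds ρ) := by
  set C : ℝ := σ * (Real.exp ρ - 1) - τ with hC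
  set L : ℝ := Real.exp (-ρ) * C with hLdef
  set Δ : ℝ → ℝ := fun t => (t + σ) * (Real.cosh ρ - 1) - τ
      + Real.sinh ρ * Real.sqrt ((t + σ) ^ 2 + ν ^ 2) with hΔ
  set G : ℝ → ℝ := fun t => σ * (Real.cosh ρ - 1) - τ
      + Real.sinh ρ * (Real.sqrt ((t + σ) ^ 2 + ν ^ 2) - (t + σ)) + σ * Real.sinh ρ with hGdef
  -- G tends to C
  have hsqrt : Tendsto (fun t : ℝ => Real.sqrt ((t + σ) ^ 2 + ν ^ 2) - (t + σ))
      atTop (nhds 0) :=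
    (sqrt_sq_add_sub_tendsto ν).comp (tendsto_atTop_add_const_right atTop σ tendsto_id)
  have hG : Tendsto G atTop (nhds C) := by
    have h1 : Tendsto (fun t : ℝ => σ * (Real.cosh ρ - 1) - τ
        + Real.sinh ρ * (Real.sqrt ((t + σ) ^ 2 + ν ^ 2) - (t + σ)) + σ * Real.sinh ρ)
        atTop (nhds (σ * (Real.cosh ρ - 1) - τ + Real.sinh ρ * 0 + σ * Real.sinh ρ)) :=
      (tendsto_const_nhds.add (hsqrt.const_mul _)).add tendsto_const_nhds
    have h2 : σ * (Real.cosh ρ - 1) - τ + Real.sinh ρ * 0 + σ * Real.sinh ρ = C := by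
      rw [hC, ← Real.cosh_add_sinh ρ]; ring
    rw [← h2]; exact h1
  -- algebraic identity: Δ t = G t - t + t * exp ρ
  have hiden : ∀ t : ℝ, Δ t = G t - t + t * Real.exp ρ := by
    intro t
    rw [hΔ, hGdef, ← Real.cosh_add_sinh ρ]; ring
  -- u t := exp(-ρ) * G t / t  tends to 0
  have hu : Tendsto (fun t : ℝ => Real.exp (-ρ) * G t / t) atTop (nhds 0) := by
    have := ((hG.const_mul (Real.exp (-ρ))).mul tendsto_inv_atTop_zero)
    simp only [mul_zero] at this
    refine this.congr fun t => by rw [div_eq_mul_inv]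
  -- t * u t = exp(-ρ) * G t for t ≠ 0; tends to L
  have htu : Tendsto (fun t : ℝ => t * (Real.exp (-ρ) * G t / t)) atTop (nhds L) := by
    refine (hG.const_mul (Real.exp (-ρ))).congr' ?_
    filter_upwards [eventually_ne_atTop (0:ℝ)] with t ht
    field_simp
  -- key limit : t * log (1 + u t) → L
  have hev : ∀ᶠ t : ℝ in atTop, -1/2 < Real.exp (-ρ) * G t / t ∧ (1:ℝ) ≤ t := by
    filter_upwards [hu.eventually (eventually_gt_nhds (show (-1/2 : ℝ) < 0 by norm_num)),
      eventually_ge_atTop (1:ℝ)] with t h1 h2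
    exact ⟨h1, h2⟩
  have hkey : Tendsto (fun t : ℝ => t * Real.log (1 + Real.exp (-ρ) * G t / t))
      atTop (nhds L) := by
    have hlow : Tendsto (fun t : ℝ => t * (Real.exp (-ρ) * G t / t) / (1 + Real.exp (-ρ) * G t / t))
        atTop (nhds L) := by
      have hden : Tendsto (fun t : ℝ => 1 + Real.exp (-ρ) * G t / t) atTop (nhds 1) := by
        simpa using (tendsto_const_nhds.add hu :
          Tendsto (fun t : ℝ => 1 + Real.exp (-ρ) * G t / t) atTop (nhds (1 + 0)))
      have h := htu.div hden one_ne_zero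
      rw [div_one] at h
      exact h
    refine tendsto_of_tendsto_of_tendsto_of_le_of_le' hlow htu ?_ ?_
    · filter_upwards [hev] with t ⟨h1, h2⟩
      set u := Real.exp (-ρ) * G t / t
      have hupos : (0:ℝ) < 1 + u := by linarith
      have hlog : u / (1 + u) ≤ Real.log (1 + u) := by
        have h := Real.log_le_sub_one_of_pos (show (0:ℝ) < (1 + u)⁻¹ by positivity)
        rw [Real.log_inv] at h
        have : 1 - (1 + u)⁻¹ ≤ Real.log (1 + u) := by linarith
        calc u / (1 + u) = 1 - (1 + u)⁻¹ := by field_simp; ring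
          _ ≤ Real.log (1 + u) := this
      calc t * u / (1 + u) = t * (u / (1 + u)) := by ring
        _ ≤ t * Real.log (1 + u) :=
          mul_le_mul_of_nonneg_left hlog (by linarith)
    · filter_upwards [hev] with t ⟨h1, h2⟩
      set u := Real.exp (-ρ) * G t / t
      have hupos : (0:ℝ) < 1 + u := by linarith
      have hlog : Real.log (1 + u) ≤ u := by
        have := Real.log_le_sub_one_of_pos hupos; linarith
      exact mul_le_mul_of_nonneg_left hlog (by linarith)
  -- eventually, log(1 + Δ t / t) - ρ = log(1 + u t)
  have heq : ∀ᶠ t : ℝ in atTop,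
      Real.log (1 + Δ t / t) - ρ = Real.log (1 + Real.exp (-ρ) * G t / t) := by
    filter_upwards [hev] with t ⟨h1, h2⟩
    have ht0 : t ≠ 0 := by linarith
    have hupos : (0:ℝ) < 1 + Real.exp (-ρ) * G t / t := by linarith
    have hfac : 1 + Δ t / t = Real.exp ρ * (1 + Real.exp (-ρ) * G t / t) := by
      have he : Real.exp ρ * Real.exp (-ρ) = 1 := by rw [← Real.exp_add]; simp
      have h3 : Real.exp ρ * (Real.exp (-ρ) * G t / t) = G t / t := by
        rw [show Real.exp ρ * (Real.exp (-ρ) * G t / t)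
          = (Real.exp ρ * Real.exp (-ρ)) * (G t / t) from by ring, he, one_mul]
      rw [hiden t, mul_add, mul_one, h3]
      field_simp
      ring
    rw [hfac, Real.log_mul (Real.exp_ne_zero ρ) (ne_of_gt hupos), Real.log_exp]
    ring
  have hfirst : Tendsto
      (fun t : ℝ => t * (Real.log (1 + Δ t / t) - ρ)) atTop (nhds L) := by
    refine hkey.congr' ?_
    filter_upwards [heq] with t h
    rw [h]
  refine ⟨hfirst, ?_⟩
  have hsecond : Tendsto (fun t : ℝ => t * (Real.log (1 + Δ t / t) - ρ) * t⁻¹ + ρ)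
      atTop (nhds (L * 0 + ρ)) :=
    (hfirst.mul tendsto_inv_atTop_zero).add tendsto_const_nhds
  rw [mul_zero, zero_add] at hsecond
  refine hsecond.congr' ?_
  filter_upwards [eventually_ne_atTop (0:ℝ)] with t ht
  field_simp
  simp only [sub_add_cancel, hΔ]
end
end
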